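/- Let (𝒜, φ) be a non-commutative probability space and, for each N ≥ 1, let a_1, …, a_N ∈ 𝒜 satisfy φ(a_i) = 0, φ(a_i²) = 1, have uniformly bounded moments of all orders (for each n ≥ 1, sup_{i,N} |φ(a_i^n)| < ∞), and be BMT independent with respect to the empty digraph on [N] (no edges). Then for every integer m ≥ 1, lim_{N→∞} φ(((a_1 + ⋯ + a_N)/√N)^m) equals 1 if m is even and 0 if m is odd; i.e., the normalized sums converge in moments to the symmetric Bernoulli distribution (δ_{−1} + δ_{+1})/2. -/

import Mathlib

/-!
Expanding `(∑ i, a i) ^ m` gives a sum over words `w : Fin m → Fin N`. For the empty digraph the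
blocks of `ker_G[w]` are the maximal runs of equal letters, and BMT independence factors `φ` of the
word into the moments `φ (a_i ^ #B)` of its blocks. A block of size one kills the term. Words all of
whose blocks are pairs contribute `1`; every other surviving word uses at most `(m - 1) / 2`
distinct letters, so there are `O(N ^ ((m - 1) / 2))` of them, negligible against `√N ^ m`.
Pairings of runs are the words `v₀ v₀ v₁ v₁ ⋯` with consecutive `vⱼ` distinct: there are none for
odd `m`, and `N ^ k - O(N ^ (k - 1))` of them for `m = 2 k`.
-/

open scoped Classical
open Filter

noncomputable section

/-- The relation defining the kernel of `f` restricted to the index set `S`,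
subordinated to the digraph with edge relation `E`: `k ∼ k'` iff `f k = f k'` and
every `l ∈ S` strictly between `k` and `k'` with `f l ≠ f k` satisfies `(f l, f k) ∈ E`. -/
def kerGRelOn {m : ℕ} {V : Type*} (E : V → V → Prop) (f : Fin m → V)
    (S : Finset (Fin m)) (k k' : Fin m) : Prop :=
  f k = f k' ∧ ∀ l ∈ S, min k k' < l → l < max k k' → f l ≠ f k → E (f l) (f k)

/-- The blocks of the kernel of `f|_S` subordinated to the digraph `E`. -/
def kerGBlocks {m : ℕ} {V : Type*} (E : V → V → Prop) (f : Fin m → V)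
    (S : Finset (Fin m)) : Finset (Finset (Fin m)) :=
  S.image fun k => S.filter fun k' => kerGRelOn E f S k k'

/-- The blocks of the plain kernel `ker[f]` of `f : [m] → V`. -/
def kerBlocks {m : ℕ} {V : Type*} (f : Fin m → V) : Finset (Finset (Fin m)) :=
  Finset.univ.image fun k => Finset.univ.filter fun k' => f k = f k'

/-- The product of `a k` for `k ∈ B`, taken in increasing order of `k`. -/
def blockProd {A : Type*} [Monoid A] {m : ℕ} (a : Fin m → A) (B : Finset (Fin m)) : A :=
  ((B.sort (· ≤ ·)).map a).prod

/-- The edge set of the nesting-crossing graph of the partition `π`, relabeled along `f`: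
the pair `(f-label of B, f-label of C)` is an edge whenever `B ≠ C` are blocks of `π` and
some `l ∈ B` lies strictly between two elements (equivalently, between min and max) of `C`. -/
def nestCrossEdges {m : ℕ} {V : Type*} (π : Finset (Finset (Fin m))) (f : Fin m → V) :
    Set (V × V) :=
  { p | ∃ B ∈ π, ∃ C ∈ π, B ≠ C ∧
      (∃ l ∈ B, ∃ c₁ ∈ C, ∃ c₂ ∈ C, c₁ < l ∧ l < c₂) ∧
      (∃ k ∈ B, f k = p.1) ∧ (∃ k' ∈ C, f k' = p.2) }

/-- A family of (non-unital) subalgebras of a non-commutative probability space `(𝒜, φ)`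
is BMT independent with respect to the digraph `E` on the index set `I`. -/
def BMTIndep {𝒜 : Type*} [Ring 𝒜] [Algebra ℂ 𝒜] (φ : 𝒜 →ₗ[ℂ] ℂ)
    {I : Type*} (E : I → I → Prop) (A : I → NonUnitalSubalgebra ℂ 𝒜) : Prop :=
  ∀ (m : ℕ), 1 ≤ m → ∀ (idx : Fin m → I) (a : Fin m → 𝒜),
    (∀ k, a k ∈ A (idx k)) →
    φ (List.ofFn a).prod = ∏ B ∈ kerGBlocks E idx Finset.univ, φ (blockProd a B)

/-- Random variables `a 0, …, a (N-1)` are BMT independent with respect to the digraph `E`. -/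
def BMTIndepVars {𝒜 : Type*} [Ring 𝒜] [Algebra ℂ 𝒜] (φ : 𝒜 →ₗ[ℂ] ℂ)
    {N : ℕ} (E : Fin N → Fin N → Prop) (a : Fin N → 𝒜) : Prop :=
  ∀ (m : ℕ) (idx : Fin m → Fin N),
    φ (List.ofFn fun k => a (idx k)).prod
      = ∏ B ∈ kerGBlocks E idx Finset.univ, φ (blockProd (fun k => a (idx k)) B)

open Finset

theorem blockProd_eq_pow {A : Type*} [Monoid A] {m : ℕ} {b : Fin m → A} {B : Finset (Fin m)}
    {c : A} (h : ∀ k ∈ B, b k = c) : blockProd b B = c ^ #B := by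
  rw [blockProd, List.prod_eq_pow_card (l := (B.sort (· ≤ ·)).map b) c, List.length_map,
    length_sort]
  simpa using h

section KernelSetoid

variable {m : ℕ} {V : Type*} {E : V → V → Prop} {f : Fin m → V} {S : Finset (Fin m)}

theorem kerGRelOn_refl (k : Fin m) : kerGRelOn E f S k k :=
  ⟨rfl, fun _ _ h₁ h₂ => absurd (h₁.trans h₂) (by simp)⟩

theorem kerGRelOn.symm {k k' : Fin m} (h : kerGRelOn E f S k k') : kerGRelOn E f S k' k := by
  refine ⟨h.1.symm, fun l hl h₁ h₂ hne => ?_⟩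
  rw [← h.1] at hne ⊢
  exact h.2 l hl (min_comm k k' ▸ h₁) (max_comm k k' ▸ h₂) hne

theorem kerGRelOn.trans {k k' k'' : Fin m} (h : kerGRelOn E f S k k')
    (h' : kerGRelOn E f S k' k'') : kerGRelOn E f S k k'' := by
  refine ⟨h.1.trans h'.1, fun l hl h₁ h₂ hne => ?_⟩
  by_cases hl' : l = k'
  · exact absurd (by rw [hl']; exact h.1.symm) hne
  have : (min k k' < l ∧ l < max k k') ∨ (min k' k'' < l ∧ l < max k' k'') := by grind
  rcases this with ⟨h₃, h₄⟩ | ⟨h₃, h₄⟩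
  · exact h.2 l hl h₃ h₄ hne
  · rw [h.1] at hne ⊢
    exact h'.2 l hl h₃ h₄ hne

variable (E f S) in
def kerGSetoid : Setoid (Fin m) where
  r := kerGRelOn E f S
  iseqv := ⟨kerGRelOn_refl, kerGRelOn.symm, kerGRelOn.trans⟩

variable (E f S) in
def kerGFinpartition : Finpartition S :=
  Finpartition.ofSetSetoid (kerGSetoid E f S) S

variable (E f S) in
@[simp]
theorem kerGFinpartition_parts : (kerGFinpartition E f S).parts = kerGBlocks E f S := rfl

theorem nonempty_of_mem_kerGBlocks {B : Finset (Fin m)} (hB : B ∈ kerGBlocks E f S) :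
    B.Nonempty :=
  (kerGFinpartition E f S).nonempty_of_mem_parts hB

theorem eq_of_mem_kerGBlocks {B : Finset (Fin m)} (hB : B ∈ kerGBlocks E f S) {k k' : Fin m}
    (hk : k ∈ B) (hk' : k' ∈ B) : f k = f k' := by
  obtain ⟨k₀, -, rfl⟩ := mem_image.1 hB
  exact (mem_filter.1 hk).2.1.symm.trans (mem_filter.1 hk').2.1

theorem blockProd_of_mem_kerGBlocks {A : Type*} [Monoid A] (b : V → A) {B : Finset (Fin m)}
    (hB : B ∈ kerGBlocks E f S) {k : Fin m} (hk : k ∈ B) :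
    blockProd (fun k => b (f k)) B = b (f k) ^ #B :=
  blockProd_eq_pow fun _ hk' => by rw [eq_of_mem_kerGBlocks hB hk' hk]

end KernelSetoid

theorem Finpartition.card_image_le_card_parts {α β : Type*} [DecidableEq α] [DecidableEq β]
    {s : Finset α} (P : Finpartition s) {f : α → β}
    (hf : ∀ B ∈ P.parts, ∀ x ∈ B, ∀ y ∈ B, f x = f y) : #(s.image f) ≤ #P.parts := by
  calc #(s.image f) ≤ #(P.parts.biUnion (·.image f)) := card_le_card fun y hy => by
        obtain ⟨x, hx, rfl⟩ := mem_image.1 hy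
        obtain ⟨B, hB, hxB⟩ := P.exists_mem hx
        exact mem_biUnion.2 ⟨B, hB, mem_image_of_mem f hxB⟩
    _ ≤ ∑ B ∈ P.parts, #(B.image f) := card_biUnion_le
    _ ≤ ∑ _B ∈ P.parts, 1 := sum_le_sum fun B hB => card_le_one.2 fun _ hx _ hy => by
        obtain ⟨x, hxB, rfl⟩ := mem_image.1 hx
        obtain ⟨y, hyB, rfl⟩ := mem_image.1 hy
        exact hf B hB x hxB y hyB
    _ = #P.parts := by simp

theorem Finpartition.two_mul_card_parts_lt {α : Type*} [DecidableEq α] {s : Finset α}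
    (P : Finpartition s) (h2 : ∀ B ∈ P.parts, 2 ≤ #B) (h : ∃ B ∈ P.parts, #B ≠ 2) :
    2 * #P.parts < #s := by
  obtain ⟨B₀, hB₀, hne⟩ := h
  rw [← P.sum_card_parts, mul_comm, ← smul_eq_mul, ← sum_const]
  exact sum_lt_sum h2 ⟨B₀, hB₀, lt_of_le_of_ne (h2 B₀ hB₀) hne.symm⟩

theorem Finpartition.two_mul_card_parts {α : Type*} [DecidableEq α] {s : Finset α}
    (P : Finpartition s) (h : ∀ B ∈ P.parts, #B = 2) : 2 * #P.parts = #s := by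
  rw [← P.sum_card_parts, sum_congr rfl h, sum_const, smul_eq_mul, mul_comm]

theorem sum_pow_eq_sum_prod_ofFn {R : Type*} [Semiring R] {ι : Type*} [Fintype ι] (b : ι → R) :
    ∀ m : ℕ, (∑ i, b i) ^ m = ∑ w : Fin m → ι, (List.ofFn fun k => b (w k)).prod
  | 0 => by simp
  | m + 1 => by
    rw [pow_succ', sum_pow_eq_sum_prod_ofFn b m, sum_mul_sum, ← Fintype.sum_prod_type',
      ← (Fin.consEquiv fun _ => ι).sum_comp]
    simp [List.ofFn_succ]

theorem card_filter_card_image_le {α β : Type*} [Fintype α] [DecidableEq α] [Fintype β]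
    [DecidableEq β] {r : ℕ} (hr : r ≤ Fintype.card β) :
    #{w : α → β | #(univ.image w) ≤ r} ≤ (Fintype.card β).choose r * r ^ Fintype.card α := by
  calc #{w : α → β | #(univ.image w) ≤ r}
      ≤ #((univ.powersetCard r).biUnion fun T => Fintype.piFinset fun _ : α => T) := by
        refine card_le_card fun w hw => ?_
        obtain ⟨T, hwT, -, hT⟩ := exists_subsuperset_card_eq (subset_univ _)
          (mem_filter.1 hw).2 (by simpa using hr)
        exact mem_biUnion.2 ⟨T, mem_powersetCard.2 ⟨subset_univ _, hT⟩,
          Fintype.mem_piFinset.2 fun a => hwT (mem_image_of_mem w (mem_univ a))⟩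
    _ ≤ ∑ T ∈ univ.powersetCard r, #(Fintype.piFinset fun _ : α => T) := card_biUnion_le
    _ = (Fintype.card β).choose r * r ^ Fintype.card α := by
        rw [sum_congr rfl fun T hT => by
          rw [Fintype.card_piFinset, prod_const, (mem_powersetCard.1 hT).2, card_univ]]
        simp

theorem card_filter_two_mul_card_image_lt_le {m N : ℕ} (hN : (m - 1) / 2 ≤ N) :
    #{w : Fin m → Fin N | 2 * #(univ.image w) < m} ≤ N ^ ((m - 1) / 2) * ((m - 1) / 2) ^ m := by
  calc #{w : Fin m → Fin N | 2 * #(univ.image w) < m}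
      ≤ #{w : Fin m → Fin N | #(univ.image w) ≤ (m - 1) / 2} :=
        card_le_card fun w hw => by
          simp only [mem_filter, mem_univ, true_and] at hw ⊢
          omega
    _ ≤ N.choose ((m - 1) / 2) * ((m - 1) / 2) ^ m := by
        have := card_filter_card_image_le (α := Fin m) (β := Fin N) (r := (m - 1) / 2)
          (by rwa [Fintype.card_fin])
        rwa [Fintype.card_fin, Fintype.card_fin] at this
    _ ≤ N ^ ((m - 1) / 2) * ((m - 1) / 2) ^ m := by gcongr; exact Nat.choose_le_pow _ _

def IsPairing {m : ℕ} {V : Type*} (E : V → V → Prop) (w : Fin m → V) : Prop :=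
  ∀ B ∈ kerGBlocks E w univ, #B = 2

theorem IsPairing.even {m : ℕ} {V : Type*} {E : V → V → Prop} {w : Fin m → V}
    (hw : IsPairing E w) : Even m := by
  have := (kerGFinpartition E w univ).two_mul_card_parts hw
  simp only [card_univ, Fintype.card_fin] at this
  exact ⟨_, this.symm.trans (two_mul _)⟩

section BlockwiseMoment

variable {𝒜 : Type*} [Ring 𝒜] [Algebra ℂ 𝒜] (φ : 𝒜 →ₗ[ℂ] ℂ) {N : ℕ}
  (E : Fin N → Fin N → Prop) (b : Fin N → 𝒜) {m : ℕ}

def blockwiseMoment (w : Fin m → Fin N) : ℂ :=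
  ∏ B ∈ kerGBlocks E w univ, φ (blockProd (fun k => b (w k)) B)

variable {E b}

theorem map_sum_pow_eq_sum_blockwiseMoment (h : BMTIndepVars φ E b) (m : ℕ) :
    φ ((∑ i, b i) ^ m) = ∑ w : Fin m → Fin N, blockwiseMoment φ E b w := by
  rw [sum_pow_eq_sum_prod_ofFn, map_sum]
  exact sum_congr rfl fun w _ => h m w

theorem blockwiseMoment_eq_one (hvar : ∀ i, φ (b i * b i) = 1) {w : Fin m → Fin N}
    (hw : IsPairing E w) : blockwiseMoment φ E b w = 1 :=
  prod_eq_one fun B hB => by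
    obtain ⟨k, hk⟩ := nonempty_of_mem_kerGBlocks hB
    rw [blockProd_of_mem_kerGBlocks b hB hk, hw B hB, sq, hvar]

theorem norm_blockwiseMoment_le {C : ℝ} (hC : 1 ≤ C) (hb : ∀ i, ∀ n ≤ m, ‖φ (b i ^ n)‖ ≤ C)
    (w : Fin m → Fin N) : ‖blockwiseMoment φ E b w‖ ≤ C ^ m := by
  rw [blockwiseMoment, norm_prod]
  calc ∏ B ∈ kerGBlocks E w univ, ‖φ (blockProd (fun k => b (w k)) B)‖
      ≤ ∏ _B ∈ kerGBlocks E w univ, C := prod_le_prod (fun _ _ => norm_nonneg _) fun B hB => by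
        obtain ⟨k, hk⟩ := nonempty_of_mem_kerGBlocks hB
        rw [blockProd_of_mem_kerGBlocks b hB hk]
        exact hb _ _ ((card_le_univ B).trans (Fintype.card_fin m).le)
    _ ≤ C ^ m := by
        rw [prod_const]
        exact pow_le_pow_right₀ hC
          (((kerGFinpartition E w univ).card_parts_le_card).trans (by simp))

theorem two_mul_card_image_lt_of_blockwiseMoment_ne_zero (hmean : ∀ i, φ (b i) = 0)
    {w : Fin m → Fin N} (hw : ¬ IsPairing E w) (h0 : blockwiseMoment φ E b w ≠ 0) :
    2 * #(univ.image w) < m := by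
  have h2 : ∀ B ∈ kerGBlocks E w univ, 2 ≤ #B := fun B hB => by
    obtain ⟨k, hk⟩ := nonempty_of_mem_kerGBlocks hB
    refine (Nat.one_lt_iff_ne_zero_and_ne_one.2 ⟨(card_pos.2 ⟨k, hk⟩).ne', fun h1 => h0 ?_⟩)
    exact prod_eq_zero hB (by rw [blockProd_of_mem_kerGBlocks b hB hk, h1, pow_one, hmean])
  have hparts := (kerGFinpartition E w univ).two_mul_card_parts_lt h2
    (by simpa [IsPairing] using hw)
  have himage := (kerGFinpartition E w univ).card_image_le_card_parts
    (f := w) fun B hB _ hx _ hy => eq_of_mem_kerGBlocks hB hx hy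
  simp only [kerGFinpartition_parts, card_univ, Fintype.card_fin] at hparts himage
  omega

theorem norm_sum_blockwiseMoment_sub_card_le (hmean : ∀ i, φ (b i) = 0)
    (hvar : ∀ i, φ (b i * b i) = 1) {C : ℝ} (hC : 1 ≤ C)
    (hb : ∀ i, ∀ n ≤ m, ‖φ (b i ^ n)‖ ≤ C) :
    ‖∑ w : Fin m → Fin N, blockwiseMoment φ E b w - #{w : Fin m → Fin N | IsPairing E w}‖
      ≤ #{w : Fin m → Fin N | 2 * #(univ.image w) < m} * C ^ m := by
  rw [← sum_filter_add_sum_filter_not univ (IsPairing E),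
    sum_congr rfl fun w hw => blockwiseMoment_eq_one φ hvar (mem_filter.1 hw).2,
    sum_const, nsmul_one, add_sub_cancel_left]
  calc ‖∑ w ∈ univ with ¬ IsPairing E w, blockwiseMoment φ E b w‖
      ≤ ∑ w ∈ univ with ¬ IsPairing E w, ‖blockwiseMoment φ E b w‖ := norm_sum_le _ _
    _ = ∑ w ∈ (univ.filter fun w => ¬ IsPairing E w).filter (fun w => 2 * #(univ.image w) < m),
          ‖blockwiseMoment φ E b w‖ :=
        (sum_filter_of_ne fun w hw h0 => two_mul_card_image_lt_of_blockwiseMoment_ne_zero φ hmean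
          (mem_filter.1 hw).2 (norm_ne_zero_iff.1 h0)).symm
    _ ≤ #((univ.filter fun w => ¬ IsPairing E w).filter
          (fun w : Fin m → Fin N => 2 * #(univ.image w) < m)) • C ^ m :=
        sum_le_card_nsmul _ _ _ fun w _ => norm_blockwiseMoment_le φ hC hb w
    _ ≤ #{w : Fin m → Fin N | 2 * #(univ.image w) < m} * C ^ m := by
        rw [nsmul_eq_mul]
        gcongr
        exact filter_subset _ _

end BlockwiseMoment

theorem card_filter_apply_eq_apply_le {β : Type*} [Fintype β] [DecidableEq β] {n : ℕ}
    {i j : Fin (n + 1)} (hij : i ≠ j) :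
    #{v : Fin (n + 1) → β | v i = v j} ≤ Fintype.card β ^ n := by
  obtain ⟨y, rfl⟩ := Fin.exists_succAbove_eq hij
  calc #{v : Fin (n + 1) → β | v (j.succAbove y) = v j}
      ≤ #(univ : Finset (Fin n → β)) := card_le_card_of_injOn (fun v => v ∘ j.succAbove)
        (fun _ _ => mem_coe.2 (mem_univ _)) fun v hv v' hv' h => by
          simp only [coe_filter, mem_univ, true_and, Set.mem_ofPred_eq] at hv hv'
          funext x
          rcases eq_or_ne x j with rfl | hx
          · rw [← hv, ← hv']
            exact congrFun h y
          · obtain ⟨z, rfl⟩ := Fin.exists_succAbove_eq hx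
            exact congrFun h z
    _ = Fintype.card β ^ n := by simp

theorem card_filter_exists_apply_eq_le {β : Type*} [Fintype β] [DecidableEq β] (n : ℕ) :
    #{v : Fin (n + 1) → β | ∃ i : Fin n, v i.castSucc = v i.succ} ≤ n * Fintype.card β ^ n := by
  calc #{v : Fin (n + 1) → β | ∃ i : Fin n, v i.castSucc = v i.succ}
      = #((univ : Finset (Fin n)).biUnion
          fun i => {v : Fin (n + 1) → β | v i.castSucc = v i.succ}) := by
        congr 1
        ext v
        simp
    _ ≤ ∑ i : Fin n, #{v : Fin (n + 1) → β | v i.castSucc = v i.succ} := card_biUnion_le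
    _ ≤ ∑ _i : Fin n, Fintype.card β ^ n :=
        sum_le_sum fun i _ => card_filter_apply_eq_apply_le Fin.castSucc_lt_succ.ne
    _ = n * Fintype.card β ^ n := by simp

section EmptyGraph

variable {m : ℕ} {V : Type*} {E : V → V → Prop} {w : Fin m → V}

theorem kerGRelOn_of_val_succ_eq {p q : Fin m} (hpq : p.val + 1 = q.val) (h : w p = w q) :
    kerGRelOn E w univ p q :=
  ⟨h, fun l _ h₁ h₂ => by
    simp only [min_lt_iff, lt_max_iff, Fin.lt_def] at h₁ h₂
    omega⟩

theorem kerGRelOn_univ_iff (hE : ∀ u v, ¬ E u v) {p q : Fin m} :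
    kerGRelOn E w univ p q ↔ ∀ l, min p q ≤ l → l ≤ max p q → w l = w p := by
  refine ⟨fun ⟨hpq, h⟩ l h₁ h₂ => ?_, fun h => ⟨(h q (min_le_right p q) (le_max_right p q)).symm,
    fun l _ h₁ h₂ hne => absurd (h l h₁.le h₂.le) hne⟩⟩
  by_contra hne
  rcases h₁.lt_or_eq with h₁ | h₁
  · rcases h₂.lt_or_eq with h₂ | h₂
    · exact hE _ _ (h l (mem_univ l) h₁ h₂ hne)
    · grind
  · grind

theorem IsPairing.card_filter_kerGRelOn (hw : IsPairing E w) (p : Fin m) :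
    #{q | kerGRelOn E w univ p q} = 2 :=
  hw _ (mem_image_of_mem _ (mem_univ p))

theorem IsPairing.exists_kerGRelOn_ne (hw : IsPairing E w) (p : Fin m) :
    ∃ q ≠ p, kerGRelOn E w univ p q := by
  obtain ⟨q, hq, hqp⟩ := exists_mem_ne (by rw [hw.card_filter_kerGRelOn p]; norm_num) p
  exact ⟨q, hqp, (mem_filter.1 hq).2⟩

theorem IsPairing.apply_eq_apply_of_val_eq (hE : ∀ u v, ¬ E u v) (hw : IsPairing E w) (j : ℕ) :
    ∀ p q : Fin m, p.val = 2 * j → q.val = 2 * j + 1 → w p = w q := by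
  induction j with
  | zero =>
    intro p q hp hq
    obtain ⟨r, hrp, hr⟩ := hw.exists_kerGRelOn_ne p
    have hr' : p.val < r.val := by rw [Ne, Fin.ext_iff] at hrp; omega
    refine ((kerGRelOn_univ_iff hE).1 hr q ?_ ?_).symm <;>
      simp only [min_le_iff, le_max_iff, Fin.le_def] <;> omega
  | succ j ih =>
    intro p q hp hq
    obtain ⟨r, hrp, hr⟩ := hw.exists_kerGRelOn_ne p
    rcases lt_or_gt_of_ne (Fin.val_ne_of_ne hrp) with hlt | hgt
    · -- `p` glued to its left neighbour would put `2j, 2j + 1, 2j + 2` in one block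
      exfalso
      obtain ⟨p', hp'⟩ : ∃ p' : Fin m, p'.val = 2 * j := ⟨⟨2 * j, by omega⟩, rfl⟩
      obtain ⟨q', hq'⟩ : ∃ q' : Fin m, q'.val = 2 * j + 1 := ⟨⟨2 * j + 1, by omega⟩, rfl⟩
      have hq'p : w q' = w p := (kerGRelOn_univ_iff hE).1 hr q'
        (by simp only [min_le_iff, Fin.le_def]; omega)
        (by simp only [le_max_iff, Fin.le_def]; omega)
      have hpq' : kerGRelOn E w univ p q' := (kerGRelOn_of_val_succ_eq (by omega) hq'p).symm
      have hpp' : kerGRelOn E w univ p p' :=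
        hpq'.trans (kerGRelOn_of_val_succ_eq (by omega) (ih p' q' hp' hq')).symm
      have h3 : 2 < #{x | kerGRelOn E w univ p x} := two_lt_card_iff.2 ⟨p, q', p',
        by simp [kerGRelOn_refl], by simpa using hpq', by simpa using hpp',
        by simp [Fin.ext_iff]; omega, by simp [Fin.ext_iff]; omega, by simp [Fin.ext_iff]; omega⟩
      rw [hw.card_filter_kerGRelOn p] at h3
      exact lt_irrefl _ h3
    · refine ((kerGRelOn_univ_iff hE).1 hr q ?_ ?_).symm <;>
        simp only [min_le_iff, le_max_iff, Fin.le_def] <;> omega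

end EmptyGraph

section PairWord

variable {V : Type*} {E : V → V → Prop}

def pairWord {k : ℕ} (v : Fin k → V) : Fin (k * 2) → V := fun p => v p.divNat

theorem pairWord_injective {k : ℕ} : Function.Injective (pairWord : (Fin k → V) → _) :=
  Function.Surjective.injective_comp_right fun j => ⟨⟨2 * j, by omega⟩, Fin.ext (by simp)⟩

theorem IsPairing.eq_pairWord (hE : ∀ u v, ¬ E u v) {k : ℕ} {w : Fin (k * 2) → V}
    (hw : IsPairing E w) : w = pairWord fun j : Fin k => w ⟨2 * j, by omega⟩ := by
  funext p
  rcases Nat.mod_two_eq_zero_or_one p.val with h | h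
  · exact congrArg w (Fin.ext (by simp; omega))
  · exact (hw.apply_eq_apply_of_val_eq hE (p.val / 2) _ p rfl (by omega)).symm

theorem kerGRelOn_pairWord_iff (hE : ∀ u v, ¬ E u v) {n : ℕ} {v : Fin (n + 1) → V}
    (hv : ∀ i : Fin n, v i.castSucc ≠ v i.succ) {p q : Fin ((n + 1) * 2)} :
    kerGRelOn E (pairWord v) univ p q ↔ p.divNat = q.divNat := by
  rw [kerGRelOn_univ_iff hE, Fin.ext_iff, Fin.coe_divNat, Fin.coe_divNat]
  constructor
  · -- otherwise positions `2j + 1` and `2j + 2` lie between `p` and `q`, carrying `v j ≠ v (j + 1)`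
    intro h
    by_contra hne
    set j := min p.val q.val / 2
    have hj : j < n := by omega
    have ha := h ⟨2 * j + 1, by omega⟩ (by simp only [min_le_iff, Fin.le_def]; omega)
      (by simp only [le_max_iff, Fin.le_def]; omega)
    have hb := h ⟨2 * j + 2, by omega⟩ (by simp only [min_le_iff, Fin.le_def]; omega)
      (by simp only [le_max_iff, Fin.le_def]; omega)
    simp only [pairWord] at ha hb
    apply hv ⟨j, hj⟩
    convert ha.trans hb.symm using 2 <;> ext <;> simp; omega
  · intro h l h₁ h₂
    simp only [min_le_iff, le_max_iff, Fin.le_def] at h₁ h₂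
    exact congrArg v (Fin.ext (by simp; omega))

theorem isPairing_pairWord (hE : ∀ u v, ¬ E u v) {n : ℕ} {v : Fin (n + 1) → V}
    (hv : ∀ i : Fin n, v i.castSucc ≠ v i.succ) : IsPairing E (pairWord v) := by
  intro B hB
  obtain ⟨p, -, rfl⟩ := mem_image.1 hB
  rw [filter_congr fun q _ => kerGRelOn_pairWord_iff hE hv]
  have : ({q | p.divNat = q.divNat} : Finset (Fin ((n + 1) * 2)))
      = {⟨2 * (p / 2), by omega⟩, ⟨2 * (p / 2) + 1, by omega⟩} := by
    ext q
    simp [Fin.ext_iff]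
    omega
  rw [this, card_pair (by simp [Fin.ext_iff])]

end PairWord

section PairingCount

variable {N : ℕ} {E : Fin N → Fin N → Prop}

theorem card_filter_isPairing_le (hE : ∀ u v, ¬ E u v) (k : ℕ) :
    #{w : Fin (k * 2) → Fin N | IsPairing E w} ≤ N ^ k := by
  calc #{w : Fin (k * 2) → Fin N | IsPairing E w}
      ≤ #((univ : Finset (Fin k → Fin N)).image pairWord) := card_le_card fun w hw =>
        mem_image.2 ⟨_, mem_univ _, ((mem_filter.1 hw).2.eq_pairWord hE).symm⟩
    _ ≤ N ^ k := card_image_le.trans (by simp)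

theorem pow_le_card_filter_isPairing_add (hE : ∀ u v, ¬ E u v) (n : ℕ) :
    N ^ (n + 1) ≤ #{w : Fin ((n + 1) * 2) → Fin N | IsPairing E w} + n * N ^ n := by
  calc N ^ (n + 1) = #{v : Fin (n + 1) → Fin N | ∀ i : Fin n, v i.castSucc ≠ v i.succ}
        + #{v : Fin (n + 1) → Fin N | ¬ ∀ i : Fin n, v i.castSucc ≠ v i.succ} := by
        rw [card_filter_add_card_filter_not]
        simp
    _ ≤ #{w : Fin ((n + 1) * 2) → Fin N | IsPairing E w} + n * N ^ n := by
        gcongr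
        · exact card_le_card_of_injOn pairWord (fun v hv => by
            simpa using isPairing_pairWord hE (mem_filter.1 hv).2) pairWord_injective.injOn
        · simpa using card_filter_exists_apply_eq_le (β := Fin N) n

theorem norm_card_filter_isPairing_sub_le (hE : ∀ u v, ¬ E u v) {m : ℕ} (hm : 1 ≤ m) :
    ‖(#{w : Fin m → Fin N | IsPairing E w} : ℂ) - (if Even m then 1 else 0) * (√N : ℂ) ^ m‖
      ≤ ((m - 1) / 2 : ℕ) * (N : ℝ) ^ ((m - 1) / 2) := by
  by_cases hev : Even m
  · obtain ⟨n, rfl⟩ : ∃ n, m = (n + 1) * 2 := ⟨m / 2 - 1, by obtain ⟨k, hk⟩ := hev; omega⟩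
    have hsqrt : (√N : ℂ) ^ ((n + 1) * 2) = (N : ℂ) ^ (n + 1) := by
      rw [mul_comm, pow_mul, ← Complex.ofReal_pow, Real.sq_sqrt N.cast_nonneg]
      norm_cast
    have hr : ((n + 1) * 2 - 1) / 2 = n := by omega
    have hup := card_filter_isPairing_le hE (n + 1)
    have hlow := pow_le_card_filter_isPairing_add hE n
    rw [if_pos hev, one_mul, hsqrt, hr, ← Complex.ofReal_natCast, ← Complex.ofReal_natCast,
      ← Complex.ofReal_pow, ← Complex.ofReal_sub, Complex.norm_real, Real.norm_eq_abs, abs_le]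
    have hup' : (#{w : Fin ((n + 1) * 2) → Fin N | IsPairing E w} : ℝ) ≤ (N : ℝ) ^ (n + 1) := by
      exact_mod_cast hup
    have hlow' : (N : ℝ) ^ (n + 1)
        ≤ #{w : Fin ((n + 1) * 2) → Fin N | IsPairing E w} + n * (N : ℝ) ^ n := by
      exact_mod_cast hlow
    constructor <;> nlinarith [pow_nonneg (N.cast_nonneg : (0 : ℝ) ≤ N) n]
  · have : #{w : Fin m → Fin N | IsPairing E w} = 0 :=
      card_eq_zero.2 (filter_eq_empty_iff.2 fun w _ hw => hev hw.even)
    rw [if_neg hev, this]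
    simp only [Nat.cast_zero, zero_mul, sub_zero, norm_zero]
    positivity

end PairingCount

section Moments

variable {𝒜 : Type*} [Ring 𝒜] [Algebra ℂ 𝒜] (φ : 𝒜 →ₗ[ℂ] ℂ) {N : ℕ}
  {E : Fin N → Fin N → Prop} {b : Fin N → 𝒜} {m : ℕ}

theorem norm_map_sum_pow_sub_le (hE : ∀ u v, ¬ E u v) (hindep : BMTIndepVars φ E b)
    (hmean : ∀ i, φ (b i) = 0) (hvar : ∀ i, φ (b i * b i) = 1) {C : ℝ} (hC : 1 ≤ C)
    (hb : ∀ i, ∀ n ≤ m, ‖φ (b i ^ n)‖ ≤ C) (hm : 1 ≤ m) (hN : (m - 1) / 2 ≤ N) :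
    ‖φ ((∑ i, b i) ^ m) - (if Even m then 1 else 0) * (√N : ℂ) ^ m‖
      ≤ ((((m - 1) / 2) ^ m : ℕ) * C ^ m + ((m - 1) / 2 : ℕ)) * (N : ℝ) ^ ((m - 1) / 2) := by
  have hmain := norm_card_filter_isPairing_sub_le hE (N := N) hm
  have herr := norm_sum_blockwiseMoment_sub_card_le φ (E := E) hmean hvar hC hb
  have hcount : (#{w : Fin m → Fin N | 2 * #(univ.image w) < m} : ℝ)
      ≤ (N : ℝ) ^ ((m - 1) / 2) * (((m - 1) / 2) ^ m : ℕ) := by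
    exact_mod_cast card_filter_two_mul_card_image_lt_le hN
  rw [map_sum_pow_eq_sum_blockwiseMoment φ hindep]
  refine (norm_sub_le_norm_sub_add_norm_sub _ (#{w : Fin m → Fin N | IsPairing E w} : ℂ) _).trans ?_
  nlinarith [pow_nonneg (zero_le_one.trans hC) m]

end Moments

theorem tendsto_div_sqrt_pow_of_norm_le {f : ℕ → ℂ} {K : ℝ} {m r : ℕ} (hr : 2 * r < m)
    (hf : ∀ᶠ N in atTop, ‖f N‖ ≤ K * (N : ℝ) ^ r) :
    Tendsto (fun N : ℕ => f N / (√N : ℂ) ^ m) atTop (nhds 0) := by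
  have hlim : Tendsto (fun N : ℕ => K * (√N)⁻¹) atTop (nhds 0) := by
    simpa using (tendsto_inv_atTop_zero.comp
      (Real.tendsto_sqrt_atTop.comp tendsto_natCast_atTop_atTop)).const_mul K
  refine squeeze_zero_norm' ?_ hlim
  filter_upwards [hf, eventually_ge_atTop 1] with N hfN hN
  have hs : 1 ≤ √(N : ℝ) := Real.one_le_sqrt.2 (by exact_mod_cast hN)
  have hpow : (N : ℝ) ^ r * √N ≤ √N ^ m := by
    calc (N : ℝ) ^ r * √N = √N ^ (2 * r + 1) := by
          rw [pow_succ, pow_mul, Real.sq_sqrt N.cast_nonneg]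
      _ ≤ √N ^ m := pow_le_pow_right₀ hs hr
  rw [norm_div, norm_pow, Complex.norm_real, Real.norm_of_nonneg (Real.sqrt_nonneg _),
    div_le_iff₀ (by positivity)]
  calc ‖f N‖ ≤ K * (N : ℝ) ^ r := hfN
    _ = K * (√N)⁻¹ * ((N : ℝ) ^ r * √N) := by field_simp
    _ ≤ K * (√N)⁻¹ * √N ^ m := by
      have hK : 0 ≤ K := nonneg_of_mul_nonneg_left ((norm_nonneg _).trans hfN) (by positivity)
      gcongr

theorem exists_one_le_forall_norm_map_pow_le {𝒜 : Type*} [Ring 𝒜] [Algebra ℂ 𝒜]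
    (φ : 𝒜 →ₗ[ℂ] ℂ) {a : (N : ℕ) → Fin N → 𝒜}
    (hmom : ∀ n : ℕ, ∃ C : ℝ, ∀ N, ∀ i : Fin N, ‖φ (a N i ^ n)‖ ≤ C) (m : ℕ) :
    ∃ C : ℝ, 1 ≤ C ∧ ∀ N, ∀ i : Fin N, ∀ n ≤ m, ‖φ (a N i ^ n)‖ ≤ C := by
  choose C hC using hmom
  obtain ⟨D, hD⟩ := (insert 1 ((range (m + 1)).image C)).exists_le
  exact ⟨D, hD 1 (mem_insert_self _ _), fun N i n hn => (hC n N i).trans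
    (hD _ (mem_insert_of_mem (mem_image_of_mem _ (mem_range.2 (Nat.lt_succ_of_le hn)))))⟩

theorem stmt14_general {𝒜 : Type*} [Ring 𝒜] [Algebra ℂ 𝒜] (φ : 𝒜 →ₗ[ℂ] ℂ)
    (a : (N : ℕ) → Fin N → 𝒜) (E : (N : ℕ) → Fin N → Fin N → Prop)
    (hempty : ∀ N (v w : Fin N), ¬ E N v w)
    (hmean : ∀ N i, φ (a N i) = 0)
    (hvar : ∀ N i, φ (a N i * a N i) = 1)
    (hindep : ∀ N, BMTIndepVars φ (E N) (a N))
    (hmom : ∀ n : ℕ, ∃ C : ℝ, ∀ N, ∀ i : Fin N, ‖φ (a N i ^ n)‖ ≤ C) :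
    ∀ m : ℕ, 1 ≤ m →
      Tendsto (fun N : ℕ => φ ((∑ i : Fin N, a N i) ^ m) / ((Real.sqrt N : ℝ) : ℂ) ^ m)
        atTop (nhds (if Even m then 1 else 0)) := by
  intro m hm
  set c : ℂ := if Even m then 1 else 0
  obtain ⟨C, hC, hbound⟩ := exists_one_le_forall_norm_map_pow_le φ hmom m
  have herr := tendsto_div_sqrt_pow_of_norm_le
    (f := fun N => φ ((∑ i, a N i) ^ m) - c * (√N : ℂ) ^ m) (by omega : 2 * ((m - 1) / 2) < m)
    (eventually_atTop.2 ⟨(m - 1) / 2, fun N hN =>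
      norm_map_sum_pow_sub_le φ (hempty N) (hindep N) (hmean N) (hvar N) hC (hbound N) hm hN⟩)
  rw [← zero_add c]
  refine (herr.add_const c).congr' ?_
  filter_upwards [eventually_ge_atTop 1] with N hN
  have : (√N : ℂ) ^ m ≠ 0 := pow_ne_zero _ (Complex.ofReal_ne_zero.2 (by positivity))
  field_simp
  ring

/-- Boolean central limit theorem. For BMT independence with respect to the
empty digraphs, the normalized sums converge in moments to `(δ₋₁ + δ₊₁)/2`. -/
theorem stmt14 {𝒜 : Type*} [Ring 𝒜] [Algebra ℂ 𝒜] (φ : 𝒜 →ₗ[ℂ] ℂ) (hφ : φ 1 = 1)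
    (a : (N : ℕ) → Fin N → 𝒜) (E : (N : ℕ) → Fin N → Fin N → Prop)
    (hempty : ∀ N (v w : Fin N), ¬ E N v w)
    (hmean : ∀ N i, φ (a N i) = 0)
    (hvar : ∀ N i, φ (a N i * a N i) = 1)
    (hindep : ∀ N, BMTIndepVars φ (E N) (a N))
    (hmom : ∀ n : ℕ, ∃ C : ℝ, ∀ N, ∀ i : Fin N, ‖φ (a N i ^ n)‖ ≤ C) :
    ∀ m : ℕ, 1 ≤ m →
      Tendsto (fun N : ℕ => φ ((∑ i : Fin N, a N i) ^ m) / ((Real.sqrt N : ℝ) : ℂ) ^ m)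
        atTop (nhds (if Even m then 1 else 0)) :=
  stmt14_general φ a E hempty hmean hvar hindep hmom

end
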